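/- Let (M₁, M₂) and (N₁, N₂) be two-outcome POVMs on ℂ^d, let p₁, ..., p_d ≥ 0 with Σ_i p_i = 1, let {e_i} be an orthonormal family in ℂ^D with D ≥ d, and set ψ = Σ_i √p_i · (|i⟩ ⊗ |e_i⟩), a unit vector in ℂ^d ⊗ ℂ^D. Then the blocks T_μ = Tr_S[((M_μ − N_μ) ⊗ I_D)(ψψ†)] satisfy ‖T₁‖_* + ‖T₂‖_* = 2·‖Δ·(M₁ − N₁)ᵀ·Δ‖_*, where Δ = diag(√p₁, ..., √p_d) and (M₁ − N₁)ᵀ is the transpose of M₁ − N₁. -/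

import Mathlib

/-!
Write `Ψ` for the `D × d` matrix `Ψ a i = ψ (i, a)`. Then `Tr_S[(X ⊗ I) ψψ†] = Ψ Xᵀ Ψᴴ`, and for
`ψ = ∑ √pᵢ |i⟩ ⊗ |eᵢ⟩` this is `Ψ = E Δ` with `E` the isometry whose columns are the `eᵢ`.
Conjugation by an isometry preserves the trace norm, so `‖T₁‖_* = ‖Δ Xᵀ Δ‖_*` for `X = M₁ - N₁`;
and since `M₂ - N₂ = -(M₁ - N₁)`, `T₂ = -T₁` has the same trace norm.
-/

open Matrix
open scoped ComplexOrder

/-- The trace norm (nuclear norm) of a complex matrix: the trace of `√(Mᴴ M)`,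
which equals the sum of the singular values of `M`. -/
noncomputable def traceNorm {n : Type*} [Fintype n] [DecidableEq n]
    (M : Matrix n n ℂ) : ℝ :=
  (((Matrix.posSemidef_conjTranspose_mul_self M).1.eigenvectorUnitary : Matrix n n ℂ) *
      Matrix.diagonal (fun i => ((Real.sqrt
        ((Matrix.posSemidef_conjTranspose_mul_self M).1.eigenvalues i) : ℝ) : ℂ)) *
      (star (Matrix.posSemidef_conjTranspose_mul_self M).1.eigenvectorUnitary :
        Matrix n n ℂ)).trace.re

/-- `partialTraceS X ρ = Tr_S[(X ⊗ I) ρ]`: the `D × D` matrix with entries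
`(T)_{ab} = ∑ i j, X_{ji} ρ_{(i,a),(j,b)}`, the partial trace over the system factor. -/
noncomputable def partialTraceS {d D : ℕ} (X : Matrix (Fin d) (Fin d) ℂ)
    (ρ : Matrix (Fin d × Fin D) (Fin d × Fin D) ℂ) : Matrix (Fin D) (Fin D) ℂ :=
  Matrix.of fun a b => ∑ i, ∑ j, X j i * ρ (i, a) (j, b)

open scoped MatrixOrder

section TraceNorm

variable {m n : Type*} [Fintype m] [DecidableEq m] [Fintype n] [DecidableEq n]

lemma traceNorm_eq_re_trace_sqrt (A : Matrix n n ℂ) :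
    traceNorm A = (CFC.sqrt (Aᴴ * A)).trace.re := by
  have hA := posSemidef_conjTranspose_mul_self A
  rw [CFC.sqrt_eq_cfc, cfc_nnreal_eq_real _ (Aᴴ * A) hA.nonneg, hA.1.cfc_eq]
  simp [traceNorm, IsHermitian.cfc, Unitary.conjStarAlgAut_apply, Function.comp_def,
    max_eq_left (hA.eigenvalues_nonneg _)]

lemma traceNorm_eq_of_conjTranspose_mul_self_eq {A B : Matrix n n ℂ} (h : Aᴴ * A = Bᴴ * B) :
    traceNorm A = traceNorm B := by
  rw [traceNorm_eq_re_trace_sqrt, traceNorm_eq_re_trace_sqrt, h]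

lemma traceNorm_neg (A : Matrix n n ℂ) : traceNorm (-A) = traceNorm A :=
  traceNorm_eq_of_conjTranspose_mul_self_eq (by simp)

lemma sqrt_mul_mul_conjTranspose_of_isometry {E : Matrix m n ℂ} (hE : Eᴴ * E = 1)
    {B : Matrix n n ℂ} (hB : 0 ≤ B) : CFC.sqrt (E * B * Eᴴ) = E * CFC.sqrt B * Eᴴ := by
  refine CFC.sqrt_unique ?_
    ((CFC.sqrt_nonneg B).posSemidef.mul_mul_conjTranspose_same E).nonneg
  calc E * CFC.sqrt B * Eᴴ * (E * CFC.sqrt B * Eᴴ)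
      = E * CFC.sqrt B * (Eᴴ * E) * CFC.sqrt B * Eᴴ := by simp only [Matrix.mul_assoc]
    _ = E * B * Eᴴ := by rw [hE, Matrix.mul_one, Matrix.mul_assoc E, CFC.sqrt_mul_sqrt_self B hB]

lemma traceNorm_mul_mul_conjTranspose_of_isometry {E : Matrix m n ℂ} (hE : Eᴴ * E = 1)
    (A : Matrix n n ℂ) : traceNorm (E * A * Eᴴ) = traceNorm A := by
  have hconj : (E * A * Eᴴ)ᴴ * (E * A * Eᴴ) = E * (Aᴴ * A) * Eᴴ := by
    calc (E * A * Eᴴ)ᴴ * (E * A * Eᴴ) = E * Aᴴ * (Eᴴ * E) * A * Eᴴ := by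
          simp only [conjTranspose_mul, conjTranspose_conjTranspose, Matrix.mul_assoc]
      _ = E * (Aᴴ * A) * Eᴴ := by rw [hE, Matrix.mul_one, Matrix.mul_assoc E]
  rw [traceNorm_eq_re_trace_sqrt, traceNorm_eq_re_trace_sqrt, hconj,
    sqrt_mul_mul_conjTranspose_of_isometry hE (posSemidef_conjTranspose_mul_self A).nonneg,
    trace_mul_cycle, hE, Matrix.one_mul]

end TraceNorm

section PartialTrace

variable {d D : ℕ}

lemma partialTraceS_neg (X : Matrix (Fin d) (Fin d) ℂ)
    (ρ : Matrix (Fin d × Fin D) (Fin d × Fin D) ℂ) :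
    partialTraceS (-X) ρ = -partialTraceS X ρ := by
  ext a b
  simp [partialTraceS, ← Finset.sum_neg_distrib]

lemma partialTraceS_vecMulVec_star (X : Matrix (Fin d) (Fin d) ℂ) (ψ : Fin d × Fin D → ℂ) :
    partialTraceS X (vecMulVec ψ (star ψ)) =
      of (fun a i => ψ (i, a)) * Xᵀ * (of fun a i => ψ (i, a))ᴴ := by
  ext a b
  simp only [partialTraceS, of_apply, vecMulVec_apply, Pi.star_apply, mul_apply,
    transpose_apply, conjTranspose_apply, Finset.sum_mul]
  rw [Finset.sum_comm]
  exact Finset.sum_congr rfl fun i _ => Finset.sum_congr rfl fun j _ => by ring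

end PartialTrace

theorem traceNorm_partialTrace_add_eq_twice_weighted_general {d D : ℕ}
    (M₁ M₂ N₁ N₂ : Matrix (Fin d) (Fin d) ℂ)
    (hMsum : M₁ + M₂ = 1)
    (hNsum : N₁ + N₂ = 1)
    (p : Fin d → ℝ)
    (e : Fin d → Fin D → ℂ)
    (he : ∀ i j, star (e i) ⬝ᵥ e j = if i = j then (1 : ℂ) else 0)
    (ψ : Fin d × Fin D → ℂ)
    (hψ : ψ = fun x => (Real.sqrt (p x.1) : ℂ) * e x.1 x.2) :
    traceNorm (partialTraceS (M₁ - N₁) (Matrix.vecMulVec ψ (star ψ))) +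
      traceNorm (partialTraceS (M₂ - N₂) (Matrix.vecMulVec ψ (star ψ))) =
      2 * traceNorm (Matrix.diagonal (fun i => (Real.sqrt (p i) : ℂ)) * (M₁ - N₁)ᵀ *
        Matrix.diagonal (fun i => (Real.sqrt (p i) : ℂ))) := by
  set Δ := diagonal fun i => (Real.sqrt (p i) : ℂ)
  set E : Matrix (Fin D) (Fin d) ℂ := of fun a i => e i a
  have hE : Eᴴ * E = 1 := by
    ext i j
    simpa [E, mul_apply, one_apply, dotProduct] using he i j
  have hΨ : (of fun a i => ψ (i, a)) = E * Δ := by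
    ext a i
    simp [E, Δ, hψ, mul_comm]
  have hΔ : Δᴴ = Δ := by simp [Δ, diagonal_conjTranspose, Pi.star_def]
  have hT₁ : partialTraceS (M₁ - N₁) (vecMulVec ψ (star ψ)) = E * (Δ * (M₁ - N₁)ᵀ * Δ) * Eᴴ := by
    rw [partialTraceS_vecMulVec_star, hΨ, conjTranspose_mul, hΔ]
    simp only [Matrix.mul_assoc]
  have hM₂N₂ : M₂ - N₂ = -(M₁ - N₁) := by
    rw [eq_sub_of_add_eq' hMsum, eq_sub_of_add_eq' hNsum]; abel
  rw [hM₂N₂, partialTraceS_neg, traceNorm_neg, hT₁,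
    traceNorm_mul_mul_conjTranspose_of_isometry hE, two_mul]

/-- For two-outcome POVMs `(M₁, M₂)`, `(N₁, N₂)` on `ℂ^d`, weights `p_i ≥ 0` summing to `1`,
an orthonormal family `{e_i}` in `ℂ^D` (`D ≥ d`), and the unit vector
`ψ = ∑ i √p_i |i⟩ ⊗ |e_i⟩`, the blocks `T_μ = Tr_S[((M_μ − N_μ) ⊗ I)(ψψ†)]` satisfy
`‖T₁‖_* + ‖T₂‖_* = 2 ‖Δ (M₁ − N₁)ᵀ Δ‖_*` where `Δ = diag(√p₁, …, √p_d)`. -/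
theorem traceNorm_partialTrace_add_eq_twice_weighted {d D : ℕ} (hdD : d ≤ D)
    (M₁ M₂ N₁ N₂ : Matrix (Fin d) (Fin d) ℂ)
    (hM₁ : M₁.PosSemidef) (hM₂ : M₂.PosSemidef) (hMsum : M₁ + M₂ = 1)
    (hN₁ : N₁.PosSemidef) (hN₂ : N₂.PosSemidef) (hNsum : N₁ + N₂ = 1)
    (p : Fin d → ℝ) (hp : ∀ i, 0 ≤ p i) (hpsum : ∑ i, p i = 1)
    (e : Fin d → Fin D → ℂ)
    (he : ∀ i j, star (e i) ⬝ᵥ e j = if i = j then (1 : ℂ) else 0)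
    (ψ : Fin d × Fin D → ℂ)
    (hψ : ψ = fun x => (Real.sqrt (p x.1) : ℂ) * e x.1 x.2) :
    traceNorm (partialTraceS (M₁ - N₁) (Matrix.vecMulVec ψ (star ψ))) +
      traceNorm (partialTraceS (M₂ - N₂) (Matrix.vecMulVec ψ (star ψ))) =
      2 * traceNorm (Matrix.diagonal (fun i => (Real.sqrt (p i) : ℂ)) * (M₁ - N₁)ᵀ *
        Matrix.diagonal (fun i => (Real.sqrt (p i) : ℂ))) :=
  traceNorm_partialTrace_add_eq_twice_weighted_general M₁ M₂ N₁ N₂ hMsum hNsum p e he ψ hψ
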